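/- arXiv:2201.11390 — 4 statements merged into one kernel-verified Lean document; each statement's English description precedes it below -/
import Mathlib

section
/- Let (X_{ij}) be an n×n array of i.i.d. real random variables with common distribution P satisfying E|X| < ∞, and let g(p) = inf{r : P(X ≥ r) ≤ p} for 0 < p < 1. Assume that g(p) → ∞ as p → 0+ and that g is slowly varying at 0, i.e. for every c > 0, g(cp)/g(p) → 1 as p → 0+. Then the expected maximum of the n i.i.d. variables satisfies E[max_{1≤i≤n} X_i] = g(1/n)·(1 + o(1)) as n → ∞, i.e. E[max_{1≤i≤n} X_i]/g(1/n) → 1. -/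
/-!
Write `Q` for the tail quantile and `M_n` for the maximum. For every level `a`,
`M_n ≤ a + ∑ᵢ (Xᵢ - a)⁺`, so `E M_n ≤ a + n E(X - a)⁺`. Slow variation gives
`Q(p/2) ≤ (3/2) Q(p)` for small `p`, and then cutting the layer-cake integral
`E(X - Q δ)⁺ = ∫₀^∞ P(X > Q δ + t) dt` at the levels `Q(2⁻ᵏδ) - Q δ`, on which the integrand is at
most `2⁻ᵏδ`, gives `E(X - Q δ)⁺ ≤ 6 δ Q(δ)`; with `a = Q(ε/n)` this yields
`E M_n ≤ (1 + 6ε) Q(ε/n)`. Conversely, with `s = Q(K/n) - 1` independence gives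
`P(M_n < s) = P(X < s)ⁿ ≤ (1 - K/n)ⁿ ≤ e^{-K}`, hence `E M_n ≥ (1 - e^{-K}) s - E X⁻`.
As `Q(c/n)/Q(1/n) → 1` for each fixed `c` and `Q(1/n) → ∞`, letting `ε → 0` and `K → ∞` proves
the theorem.
-/

open MeasureTheory ProbabilityTheory Filter Topology
open Set
open scoped ENNReal

-- For `p ≥ 1` the set is not bounded below and `sInf` returns the junk value `0`.
noncomputable def tailQuantile (P : Measure ℝ) (p : ℝ) : ℝ :=
  sInf {r : ℝ | P.real (Ici r) ≤ p}

def SlowlyVaryingAtZero (f : ℝ → ℝ) : Prop :=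
  ∀ c : ℝ, 0 < c → Tendsto (fun p => f (c * p) / f p) (𝓝[>] 0) (𝓝 1)

section Quantile

variable {P : Measure ℝ} {p q r : ℝ}

lemma nonempty_setOf_measureReal_Ici_le [IsFiniteMeasure P] (hp : 0 < p) :
    {r : ℝ | P.real (Ici r) ≤ p}.Nonempty := by
  have hlim : Tendsto (fun r => P (Ici r)) atTop (𝓝 0) := by
    have := tendsto_measure_iInter_atTop (μ := P) (fun r => measurableSet_Ici.nullMeasurableSet)
      (fun _ _ h => Ici_subset_Ici.2 h) ⟨0, measure_ne_top P _⟩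
    rwa [iInter_eq_empty_iff.2 fun x => ⟨x + 1, by simp⟩, measure_empty] at this
  obtain ⟨r, hr⟩ := (hlim.eventually (gt_mem_nhds (ENNReal.ofReal_pos.2 hp))).exists
  exact ⟨r, ENNReal.toReal_le_of_le_ofReal hp.le hr.le⟩

lemma bddBelow_setOf_measureReal_Ici_le [IsProbabilityMeasure P] (hp : p < 1) :
    BddBelow {r : ℝ | P.real (Ici r) ≤ p} := by
  have hlim : Tendsto (fun r => P.real (Ici r)) atBot (𝓝 1) := by
    have := tendsto_measure_Ici_atBot P
    rw [measure_univ] at this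
    exact (ENNReal.tendsto_toReal ENNReal.one_ne_top).comp this
  obtain ⟨r₀, hr₀⟩ := (hlim.eventually (lt_mem_nhds hp)).exists_forall_of_atBot
  exact ⟨r₀, fun r hr => not_lt.1 fun hlt => (hr₀ r hlt.le).not_ge hr⟩

lemma measureReal_Ici_le_of_tailQuantile_lt [IsFiniteMeasure P] (hp : 0 < p)
    (h : tailQuantile P p < r) : P.real (Ici r) ≤ p := by
  obtain ⟨s, hs, hsr⟩ := exists_lt_of_csInf_lt (nonempty_setOf_measureReal_Ici_le hp) h
  exact (measureReal_mono (Ici_subset_Ici.2 hsr.le)).trans hs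

lemma lt_measureReal_Ici_of_lt_tailQuantile [IsProbabilityMeasure P] (hp : p < 1)
    (h : r < tailQuantile P p) : p < P.real (Ici r) :=
  not_le.1 fun hr => h.not_ge (csInf_le (bddBelow_setOf_measureReal_Ici_le hp) hr)

lemma tailQuantile_anti [IsProbabilityMeasure P] (hp : 0 < p) (hq : q < 1) (hpq : p ≤ q) :
    tailQuantile P q ≤ tailQuantile P p :=
  csInf_le_csInf (bddBelow_setOf_measureReal_Ici_le hq) (nonempty_setOf_measureReal_Ici_le hp)
    fun _ hr => le_trans hr hpq

end Quantile

lemma tendsto_const_mul_nhdsGT_zero {c : ℝ} (hc : 0 < c) :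
    Tendsto (c * ·) (𝓝[>] 0) (𝓝[>] 0) :=
  tendsto_iff_comap.2 (comap_mulLeft_nhdsGT_zero hc).ge

lemma tendsto_const_div_natCast_nhdsGT_zero {c : ℝ} (hc : 0 < c) :
    Tendsto (fun n : ℕ => c / n) atTop (𝓝[>] 0) :=
  ((tendsto_const_mul_nhdsGT_zero hc).comp
    (tendsto_inv_atTop_nhdsGT_zero.comp tendsto_natCast_atTop_atTop)).congr
    fun _ => (div_eq_mul_inv _ _).symm

namespace SlowlyVaryingAtZero

variable {f g : ℝ → ℝ}

lemma congr (hf : SlowlyVaryingAtZero f) (hfg : f =ᶠ[𝓝[>] 0] g) : SlowlyVaryingAtZero g :=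
  fun c hc => (hf c hc).congr' <| by
    filter_upwards [hfg, eventually_nhdsGT_zero_mul_left hc hfg] with p hp hcp
    rw [hp, hcp]

lemma eventually_le_mul (hf : SlowlyVaryingAtZero f) (hinf : Tendsto f (𝓝[>] 0) atTop)
    {c C : ℝ} (hc : 0 < c) (hC : 1 < C) : ∀ᶠ p in 𝓝[>] 0, f (c * p) ≤ C * f p := by
  filter_upwards [(hf c hc).eventually_lt_const hC, hinf.eventually_gt_atTop 0] with p hlt hpos
  exact ((div_lt_iff₀ hpos).1 hlt).le

lemma tendsto_natCast (hf : SlowlyVaryingAtZero f) {c : ℝ} (hc : 0 < c) :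
    Tendsto (fun n : ℕ => f (c / n) / f (1 / n)) atTop (𝓝 1) :=
  ((hf c hc).comp (tendsto_const_div_natCast_nhdsGT_zero one_pos)).congr
    fun _ => by simp only [Function.comp_apply, mul_one_div]

end SlowlyVaryingAtZero

lemma Ioi_subset_iUnion_Ioc {α : Type*} [LinearOrder α] {b : ℕ → α} {a : α} (hb0 : b 0 ≤ a)
    (hb : Tendsto b atTop atTop) : Ioi a ⊆ ⋃ k, Ioc (b k) (b (k + 1)) := by
  classical
  intro t (ht : a < t)
  have hex : ∃ m, t ≤ b m := (hb.eventually_ge_atTop t).exists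
  obtain ⟨k, hk⟩ : ∃ k, Nat.find hex = k + 1 :=
    Nat.exists_eq_succ_of_ne_zero fun h => (h ▸ Nat.find_spec hex).not_gt (hb0.trans_lt ht)
  exact mem_iUnion.2 ⟨k, not_le.1 (Nat.find_min hex (hk ▸ k.lt_succ_self)), hk ▸ Nat.find_spec hex⟩

lemma setLIntegral_Ioi_le_tsum {f : ℝ → ℝ≥0∞} {b : ℕ → ℝ} {c : ℕ → ℝ≥0∞} {a : ℝ}
    (hb0 : b 0 ≤ a) (hb : Tendsto b atTop atTop)
    (hf : ∀ k, ∀ t ∈ Ioc (b k) (b (k + 1)), f t ≤ c k) :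
    ∫⁻ t in Ioi a, f t ≤ ∑' k, c k * ENNReal.ofReal (b (k + 1) - b k) :=
  calc ∫⁻ t in Ioi a, f t ≤ ∫⁻ t in ⋃ k, Ioc (b k) (b (k + 1)), f t :=
        lintegral_mono_set (Ioi_subset_iUnion_Ioc hb0 hb)
    _ ≤ ∑' k, ∫⁻ t in Ioc (b k) (b (k + 1)), f t := lintegral_iUnion_le _ _
    _ ≤ ∑' k, c k * ENNReal.ofReal (b (k + 1) - b k) := ENNReal.tsum_le_tsum fun k => by
        calc ∫⁻ t in Ioc (b k) (b (k + 1)), f t ≤ ∫⁻ _ in Ioc (b k) (b (k + 1)), c k :=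
              setLIntegral_mono measurable_const (hf k)
          _ = _ := by rw [setLIntegral_const, Real.volume_Ioc]

lemma two_inv_pow_mul_mem_Ioc {δ : ℝ} (hδ : 0 < δ) (k : ℕ) : 2⁻¹ ^ k * δ ∈ Ioc 0 δ :=
  ⟨by positivity, mul_le_of_le_one_left hδ.le (pow_le_one₀ (by norm_num) (by norm_num))⟩

lemma apply_two_inv_pow_mul_le {f : ℝ → ℝ} {C δ₀ δ : ℝ} (hC : 0 ≤ C)
    (hf : ∀ p ∈ Ioc 0 δ₀, f (2⁻¹ * p) ≤ C * f p) (hδ : δ ∈ Ioc 0 δ₀) (k : ℕ) :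
    f (2⁻¹ ^ k * δ) ≤ C ^ k * f δ := by
  induction k with
  | zero => simp
  | succ k ih =>
    calc f (2⁻¹ ^ (k + 1) * δ) = f (2⁻¹ * (2⁻¹ ^ k * δ)) := by rw [pow_succ', mul_assoc]
      _ ≤ C * f (2⁻¹ ^ k * δ) := hf _ (Ioc_subset_Ioc_right hδ.2 (two_inv_pow_mul_mem_Ioc hδ.1 k))
      _ ≤ C ^ (k + 1) * f δ := by rw [pow_succ', mul_assoc]; gcongr

lemma measure_lt_max_sub_le_of_tailQuantile_lt {P : Measure ℝ} [IsFiniteMeasure P] {a t p : ℝ}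
    (ht : 0 ≤ t) (hp : 0 < p) (h : tailQuantile P p < a + t) :
    P {x | t < max (x - a) 0} ≤ ENNReal.ofReal p := by
  have hsub : {x | t < max (x - a) 0} ⊆ Ici (a + t) := fun x (hx : t < max (x - a) 0) => by
    rcases lt_max_iff.1 hx with hx | hx <;> simp only [mem_Ici] <;> linarith
  refine (measure_mono hsub).trans ?_
  rw [← ENNReal.ofReal_toReal (measure_ne_top P _)]
  exact ENNReal.ofReal_le_ofReal (measureReal_Ici_le_of_tailQuantile_lt hp h)

lemma tsum_ofReal_two_inv_pow_mul_three_halves_pow {δ a : ℝ} (hδ : 0 ≤ δ) (ha : 0 ≤ a) :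
    ∑' k : ℕ, ENNReal.ofReal (2⁻¹ ^ k * δ * ((3 / 2) ^ (k + 1) * a)) =
      ENNReal.ofReal (6 * δ * a) := by
  have hterm (k : ℕ) : 2⁻¹ ^ k * δ * ((3 / 2) ^ (k + 1) * a) = 3 / 2 * δ * a * (3 / 4) ^ k := by
    rw [pow_succ, show (3 / 4 : ℝ) = 2⁻¹ * (3 / 2) by norm_num, mul_pow]
    ring
  simp only [hterm]
  rw [← ENNReal.ofReal_tsum_of_nonneg (fun k => by positivity)
    ((summable_geometric_of_lt_one (by norm_num) (by norm_num)).mul_left _),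
    tsum_mul_left, tsum_geometric_of_lt_one (by norm_num) (by norm_num)]
  congr 1
  ring

lemma integral_max_sub_tailQuantile_le {P : Measure ℝ} [IsProbabilityMeasure P] {δ₀ δ : ℝ}
    (hδ₀ : δ₀ < 1) (hinf : Tendsto (tailQuantile P) (𝓝[>] 0) atTop)
    (hdouble : ∀ p ∈ Ioc 0 δ₀, tailQuantile P (2⁻¹ * p) ≤ 3 / 2 * tailQuantile P p)
    (hδ : δ ∈ Ioc 0 δ₀) :
    ∫ x, max (x - tailQuantile P δ) 0 ∂P ≤ 6 * δ * tailQuantile P δ := by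
  set Q := tailQuantile P
  set a := Q δ
  set b : ℕ → ℝ := fun k => Q (2⁻¹ ^ k * δ) - a with hb
  have hmem := two_inv_pow_mul_mem_Ioc hδ.1
  have hb_nonneg (k : ℕ) : 0 ≤ b k :=
    sub_nonneg.2 <| tailQuantile_anti (hmem k).1 (hδ.2.trans_lt hδ₀) (hmem k).2
  have ha : 0 ≤ a := by
    have := hdouble δ hδ
    have := hb_nonneg 1
    simp only [hb, pow_one] at this
    linarith
  have hb_succ (k : ℕ) : b (k + 1) - b k ≤ (3 / 2) ^ (k + 1) * a := by
    have hk := hb_nonneg k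
    have := apply_two_inv_pow_mul_le (by norm_num) hdouble hδ (k + 1)
    simp only [hb] at hk ⊢
    linarith
  have hb_top : Tendsto b atTop atTop := by
    refine tendsto_atTop_add_const_right _ (-a) (hinf.comp ?_)
    exact ((tendsto_const_mul_nhdsGT_zero hδ.1).comp
      (tendsto_pow_atTop_nhdsWithin_zero_of_lt_one (by norm_num) (by norm_num))).congr
      fun _ => mul_comm _ _
  have hlevel (k : ℕ) (t : ℝ) (ht : t ∈ Ioc (b k) (b (k + 1))) :
      P {x | t < max (x - a) 0} ≤ ENNReal.ofReal (2⁻¹ ^ k * δ) :=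
    measure_lt_max_sub_le_of_tailQuantile_lt ((hb_nonneg k).trans ht.1.le) (hmem k).1
      (by simp only [hb] at ht; linarith [ht.1])
  have hf_nonneg : 0 ≤ᵐ[P] fun x => max (x - a) 0 := ae_of_all _ fun x => le_max_right _ _
  have hf_meas : Measurable fun x : ℝ => max (x - a) 0 := by fun_prop
  have hlayer : ∫⁻ x, ENNReal.ofReal (max (x - a) 0) ∂P ≤ ENNReal.ofReal (6 * δ * a) :=
    calc ∫⁻ x, ENNReal.ofReal (max (x - a) 0) ∂P
        = ∫⁻ t in Ioi 0, P {x | t < max (x - a) 0} :=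
          lintegral_eq_lintegral_meas_lt P hf_nonneg hf_meas.aemeasurable
      _ ≤ ∑' k, ENNReal.ofReal (2⁻¹ ^ k * δ) * ENNReal.ofReal (b (k + 1) - b k) :=
          setLIntegral_Ioi_le_tsum (by simp [hb, a]) hb_top hlevel
      _ ≤ ∑' k : ℕ, ENNReal.ofReal (2⁻¹ ^ k * δ * ((3 / 2) ^ (k + 1) * a)) :=
          ENNReal.tsum_le_tsum fun k => by
            rw [← ENNReal.ofReal_mul (hmem k).1.le]
            exact ENNReal.ofReal_le_ofReal (mul_le_mul_of_nonneg_left (hb_succ k) (hmem k).1.le)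
      _ = ENNReal.ofReal (6 * δ * a) := tsum_ofReal_two_inv_pow_mul_three_halves_pow hδ.1.le ha
  rw [integral_eq_lintegral_of_nonneg_ae hf_nonneg hf_meas.aestronglyMeasurable]
  exact ENNReal.toReal_le_of_le_ofReal (by have := hδ.1; positivity) hlayer

lemma integrable_of_map_eq {Ω : Type*} [MeasurableSpace Ω] {μ : Measure Ω} {P : Measure ℝ}
    {Y : Ω → ℝ} (hY : Measurable Y) (hlaw : μ.map Y = P) (hint : Integrable id P) :
    Integrable Y μ :=
  (integrable_map_measure aestronglyMeasurable_id hY.aemeasurable).1 (hlaw ▸ hint)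

section MaxIID

variable {Ω ι : Type*} [MeasurableSpace Ω] {μ : Measure Ω} [Fintype ι] [Nonempty ι]
  {X : ι → Ω → ℝ} {P : Measure ℝ}

lemma integrable_iSup_of_integrable (hX : ∀ i, Integrable (X i) μ) :
    Integrable (fun ω => ⨆ i, X i ω) μ := by
  obtain ⟨i₀⟩ := ‹Nonempty ι›
  refine integrable_of_le_of_le
    (AEMeasurable.iSup fun i => (hX i).aemeasurable).aestronglyMeasurable
    (ae_of_all _ fun ω => le_ciSup (Finite.bddAbove_range _) i₀)
    (ae_of_all _ fun ω => ciSup_le fun i => ?_) (hX i₀)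
    (integrable_finsetSum Finset.univ fun i _ => (hX i).abs)
  exact (le_abs_self _).trans (Finset.single_le_sum (f := fun i => |X i ω|)
    (fun _ _ => abs_nonneg _) (Finset.mem_univ i))

lemma integral_iSup_le [IsProbabilityMeasure μ] (hmeas : ∀ i, Measurable (X i))
    (hlaw : ∀ i, μ.map (X i) = P) (hint : Integrable id P) (a : ℝ) :
    ∫ ω, (⨆ i, X i ω) ∂μ ≤ a + Fintype.card ι * ∫ x, max (x - a) 0 ∂P := by
  have hint_X (i : ι) := integrable_of_map_eq (hmeas i) (hlaw i) hint
  have hint_pos (i : ι) : Integrable (fun ω => max (X i ω - a) 0) μ :=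
    ((hint_X i).sub (integrable_const a)).pos_part
  have hint_sum : Integrable (fun ω => ∑ i, max (X i ω - a) 0) μ :=
    integrable_finsetSum _ fun i _ => hint_pos i
  have hlaw_pos (i : ι) : ∫ ω, max (X i ω - a) 0 ∂μ = ∫ x, max (x - a) 0 ∂P := by
    rw [← hlaw i, integral_map (hmeas i).aemeasurable (by fun_prop)]
  calc ∫ ω, (⨆ i, X i ω) ∂μ ≤ ∫ ω, (a + ∑ i, max (X i ω - a) 0) ∂μ := by
        refine integral_mono (integrable_iSup_of_integrable hint_X)
          ((integrable_const a).add hint_sum) fun ω => ciSup_le fun i => ?_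
        have := Finset.single_le_sum (f := fun i => max (X i ω - a) 0)
          (fun _ _ => le_max_right _ _) (Finset.mem_univ i)
        linarith [le_max_left (X i ω - a) 0]
    _ = a + Fintype.card ι * ∫ x, max (x - a) 0 ∂P := by
        rw [integral_add (integrable_const a) hint_sum,
          integral_finsetSum _ fun i _ => hint_pos i]
        simp [hlaw_pos]

lemma measureReal_iSup_lt_eq_pow (hmeas : ∀ i, Measurable (X i)) (hindep : iIndepFun X μ)
    (hlaw : ∀ i, μ.map (X i) = P) (s : ℝ) :
    μ.real {ω | ⨆ i, X i ω < s} = P.real (Iio s) ^ Fintype.card ι := by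
  have hset : {ω | ⨆ i, X i ω < s} = ⋂ i, X i ⁻¹' Iio s := by
    ext ω
    obtain ⟨j, hj⟩ := exists_eq_ciSup_of_finite (f := fun i => X i ω)
    simp only [mem_ofPred_eq, mem_iInter, mem_preimage, mem_Iio]
    exact ⟨fun h i => (le_ciSup (Finite.bddAbove_range _) i).trans_lt h, fun h => hj ▸ h j⟩
  have hlaw_Iio (i : ι) : μ (X i ⁻¹' Iio s) = P (Iio s) := by
    rw [← Measure.map_apply (hmeas i) measurableSet_Iio, hlaw i]
  rw [hset, measureReal_def, hindep.meas_iInter fun i => ⟨Iio s, measurableSet_Iio, rfl⟩]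
  simp [hlaw_Iio, measureReal_def]

lemma le_integral_iSup [IsProbabilityMeasure μ] (hmeas : ∀ i, Measurable (X i))
    (hindep : iIndepFun X μ) (hlaw : ∀ i, μ.map (X i) = P) (hint : Integrable id P) (s : ℝ) :
    s * (1 - P.real (Iio s) ^ Fintype.card ι) - ∫ x, max (-x) 0 ∂P ≤ ∫ ω, (⨆ i, X i ω) ∂μ := by
  obtain ⟨i₀⟩ := ‹Nonempty ι›
  set A := {ω | s ≤ ⨆ i, X i ω}
  have hA : MeasurableSet A := measurableSet_le measurable_const (Measurable.iSup hmeas)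
  have hμA : μ.real A = 1 - P.real (Iio s) ^ Fintype.card ι := by
    have hAc : {ω | ⨆ i, X i ω < s} = Aᶜ := by ext; simp [A]
    rw [← measureReal_iSup_lt_eq_pow hmeas hindep hlaw s, hAc, probReal_compl_eq_one_sub hA,
      sub_sub_cancel]
  have hint_neg : Integrable (fun ω => max (-X i₀ ω) 0) μ :=
    (integrable_of_map_eq (hmeas i₀) (hlaw i₀) hint).neg.pos_part
  have hlaw_neg : ∫ ω, max (-X i₀ ω) 0 ∂μ = ∫ x, max (-x) 0 ∂P := by
    rw [← hlaw i₀, integral_map (hmeas i₀).aemeasurable (by fun_prop)]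
  have hpointwise (ω : Ω) : A.indicator (fun _ => s) ω - max (-X i₀ ω) 0 ≤ ⨆ i, X i ω := by
    have hle : X i₀ ω ≤ ⨆ i, X i ω := le_ciSup (f := fun i => X i ω) (Finite.bddAbove_range _) i₀
    by_cases hω : ω ∈ A
    · rw [indicator_of_mem hω]
      linarith [le_max_right (-X i₀ ω) 0, show s ≤ ⨆ i, X i ω from hω]
    · rw [indicator_of_notMem hω]
      linarith [le_max_left (-X i₀ ω) 0]
  calc s * (1 - P.real (Iio s) ^ Fintype.card ι) - ∫ x, max (-x) 0 ∂P
      = ∫ ω, (A.indicator (fun _ => s) ω - max (-X i₀ ω) 0) ∂μ := by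
        rw [integral_sub ((integrable_const s).indicator hA) hint_neg,
          integral_indicator_const s hA, hlaw_neg, hμA, smul_eq_mul, mul_comm]
    _ ≤ ∫ ω, (⨆ i, X i ω) ∂μ :=
        integral_mono (((integrable_const s).indicator hA).sub hint_neg)
          (integrable_iSup_of_integrable fun i => integrable_of_map_eq (hmeas i) (hlaw i) hint)
          hpointwise

end MaxIID

lemma tendsto_div_nhds_one_of_eventually {α : Type*} {l : Filter α} {f h : α → ℝ}
    (hh : ∀ᶠ x in l, 0 < h x) (hlower : ∀ a < 1, ∀ᶠ x in l, a * h x < f x)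
    (hupper : ∀ a > 1, ∀ᶠ x in l, f x < a * h x) : Tendsto (fun x => f x / h x) l (𝓝 1) :=
  tendsto_order.2
    ⟨fun a ha => ((hlower a ha).and hh).mono fun _ hx => (lt_div_iff₀ hx.2).2 hx.1,
      fun a ha => ((hupper a ha).and hh).mono fun _ hx => (div_lt_iff₀ hx.2).2 hx.1⟩

section Asymptotics

variable {Ω : Type*} [MeasurableSpace Ω] {μ : Measure Ω} [IsProbabilityMeasure μ]
  {X : ℕ → Ω → ℝ} {P : Measure ℝ} [IsProbabilityMeasure P]

lemma integral_iSup_le_mul_tailQuantile (hmeas : ∀ i, Measurable (X i))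
    (hlaw : ∀ i, μ.map (X i) = P) (hint : Integrable id P) {δ₀ ε : ℝ} (hδ₀ : δ₀ < 1)
    (hinf : Tendsto (tailQuantile P) (𝓝[>] 0) atTop)
    (hdouble : ∀ p ∈ Ioc 0 δ₀, tailQuantile P (2⁻¹ * p) ≤ 3 / 2 * tailQuantile P p)
    (hε : ε ∈ Ioc 0 δ₀) {n : ℕ} (hn : 1 ≤ n) :
    ∫ ω, (⨆ i : Fin n, X i ω) ∂μ ≤ (1 + 6 * ε) * tailQuantile P (ε / n) := by
  have : NeZero n := ⟨by omega⟩
  have hεn : ε / n ∈ Ioc 0 δ₀ :=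
    ⟨div_pos hε.1 (by positivity), (div_le_self hε.1.le (by exact_mod_cast hn)).trans hε.2⟩
  calc ∫ ω, (⨆ i : Fin n, X i ω) ∂μ
      ≤ tailQuantile P (ε / n) + n * ∫ x, max (x - tailQuantile P (ε / n)) 0 ∂P := by
        simpa using integral_iSup_le (fun i : Fin n => hmeas i) (fun i => hlaw i) hint _
    _ ≤ tailQuantile P (ε / n) + n * (6 * (ε / n) * tailQuantile P (ε / n)) := by
        gcongr
        exact integral_max_sub_tailQuantile_le hδ₀ hinf hdouble hεn
    _ = (1 + 6 * ε) * tailQuantile P (ε / n) := by field_simp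

lemma le_integral_iSup_of_one_le_tailQuantile (hmeas : ∀ i, Measurable (X i))
    (hindep : iIndepFun X μ) (hlaw : ∀ i, μ.map (X i) = P) (hint : Integrable id P) {K : ℝ}
    {n : ℕ} (hK : 0 < K) (hKn : K < n) (hQ : 1 ≤ tailQuantile P (K / n)) :
    (tailQuantile P (K / n) - 1) * (1 - Real.exp (-K)) - ∫ x, max (-x) 0 ∂P ≤
      ∫ ω, (⨆ i : Fin n, X i ω) ∂μ := by
  have : NeZero n := ⟨by rintro rfl; simp at hKn; linarith⟩
  set s := tailQuantile P (K / n) - 1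
  have hKn₁ : K / n < 1 := (div_lt_one (hK.trans hKn)).2 hKn
  have hPs : P.real (Iio s) ≤ 1 - K / n := by
    have := lt_measureReal_Ici_of_lt_tailQuantile hKn₁ (show s < tailQuantile P (K / n) by
      linarith)
    rw [← compl_Ici, probReal_compl_eq_one_sub measurableSet_Ici]
    linarith
  have hpow : P.real (Iio s) ^ n ≤ Real.exp (-K) :=
    (pow_le_pow_left₀ measureReal_nonneg hPs n).trans (Real.one_sub_div_pow_le_exp_neg hKn.le)
  calc s * (1 - Real.exp (-K)) - ∫ x, max (-x) 0 ∂P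
      ≤ s * (1 - P.real (Iio s) ^ n) - ∫ x, max (-x) 0 ∂P := by
        gcongr
    _ ≤ ∫ ω, (⨆ i : Fin n, X i ω) ∂μ := by
        simpa using le_integral_iSup (fun i : Fin n => hmeas i)
          (hindep.precomp Fin.val_injective) (fun i => hlaw i) hint s

lemma eventually_integral_iSup_lt_mul (hmeas : ∀ i, Measurable (X i))
    (hlaw : ∀ i, μ.map (X i) = P) (hint : Integrable id P)
    (hinf : Tendsto (tailQuantile P) (𝓝[>] 0) atTop)
    (hslow : SlowlyVaryingAtZero (tailQuantile P)) {a : ℝ} (ha : 1 < a) :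
    ∀ᶠ n : ℕ in atTop, ∫ ω, (⨆ i : Fin n, X i ω) ∂μ < a * tailQuantile P (1 / n) := by
  set Q := tailQuantile P
  obtain ⟨δ₀, hδ₀, hdouble⟩ := mem_nhdsGT_iff_exists_Ioc_subset.1
    ((hslow.eventually_le_mul hinf (c := 2⁻¹) (C := 3 / 2) (by norm_num) (by norm_num)).and
      (nhdsWithin_le_nhds (eventually_lt_nhds one_pos)))
  set ε := min δ₀ ((a - 1) / 12)
  have hε : ε ∈ Ioc 0 δ₀ := ⟨lt_min hδ₀ (by linarith), min_le_left _ _⟩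
  have hεa : 1 + 6 * ε < a := by linarith [min_le_right δ₀ ((a - 1) / 12)]
  have hlim := (hslow.tendsto_natCast hε.1).const_mul (1 + 6 * ε)
  rw [mul_one] at hlim
  have hQ_pos : ∀ᶠ n : ℕ in atTop, 0 < Q (1 / n) :=
    (hinf.comp (tendsto_const_div_natCast_nhdsGT_zero one_pos)).eventually_gt_atTop 0
  filter_upwards [hlim.eventually_lt_const hεa, hQ_pos, eventually_ge_atTop 1] with n hn hQ hn1
  calc ∫ ω, (⨆ i : Fin n, X i ω) ∂μ ≤ (1 + 6 * ε) * Q (ε / n) :=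
        integral_iSup_le_mul_tailQuantile hmeas hlaw hint (hdouble ⟨hδ₀, le_rfl⟩).2 hinf
          (fun p hp => (hdouble hp).1) hε hn1
    _ = (1 + 6 * ε) * (Q (ε / n) / Q (1 / n)) * Q (1 / n) := by field_simp
    _ < a * Q (1 / n) := mul_lt_mul_of_pos_right hn hQ

lemma eventually_mul_lt_integral_iSup (hmeas : ∀ i, Measurable (X i)) (hindep : iIndepFun X μ)
    (hlaw : ∀ i, μ.map (X i) = P) (hint : Integrable id P)
    (hinf : Tendsto (tailQuantile P) (𝓝[>] 0) atTop)
    (hslow : SlowlyVaryingAtZero (tailQuantile P)) {a : ℝ} (ha : a < 1) :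
    ∀ᶠ n : ℕ in atTop, a * tailQuantile P (1 / n) < ∫ ω, (⨆ i : Fin n, X i ω) ∂μ := by
  set Q := tailQuantile P
  set C := ∫ x, max (-x) 0 ∂P
  obtain ⟨K, hKe, hK⟩ := ((Real.tendsto_exp_neg_atTop_nhds_zero.eventually
    (gt_mem_nhds (sub_pos.2 ha))).and (eventually_gt_atTop 0)).exists
  have hQn := hinf.comp (tendsto_const_div_natCast_nhdsGT_zero one_pos)
  have hlim : Tendsto (fun n : ℕ => (1 - Real.exp (-K)) * (Q (K / n) / Q (1 / n))
      - (1 - Real.exp (-K) + C) * (Q (1 / n))⁻¹) atTop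
      (𝓝 ((1 - Real.exp (-K)) * 1 - (1 - Real.exp (-K) + C) * 0)) :=
    ((hslow.tendsto_natCast hK).const_mul _).sub (hQn.inv_tendsto_atTop.const_mul _)
  rw [mul_one, mul_zero, sub_zero] at hlim
  have hQ_pos : ∀ᶠ n : ℕ in atTop, 0 < Q (1 / n) := hQn.eventually_gt_atTop 0
  have hQK : ∀ᶠ n : ℕ in atTop, 1 ≤ Q (K / n) :=
    (hinf.comp (tendsto_const_div_natCast_nhdsGT_zero hK)).eventually_ge_atTop 1
  filter_upwards [hlim.eventually_const_lt (show a < 1 - Real.exp (-K) by linarith), hQ_pos, hQK,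
    tendsto_natCast_atTop_atTop.eventually_gt_atTop K] with n hn hQ hQK hKn
  calc a * Q (1 / n)
      < ((1 - Real.exp (-K)) * (Q (K / n) / Q (1 / n))
        - (1 - Real.exp (-K) + C) * (Q (1 / n))⁻¹) * Q (1 / n) := mul_lt_mul_of_pos_right hn hQ
    _ = (Q (K / n) - 1) * (1 - Real.exp (-K)) - C := by
        field_simp
        ring
    _ ≤ ∫ ω, (⨆ i : Fin n, X i ω) ∂μ :=
        le_integral_iSup_of_one_le_tailQuantile hmeas hindep hlaw hint hK hKn hQK

end Asymptotics

/-- **Maximum of i.i.d. random variables** (Theorem 1, part (1)).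
If `X 0, X 1, …` are i.i.d. real random variables with common law `P`, `E|X| < ∞`,
and the tail quantile function `g p = inf {r : P(X ≥ r) ≤ p}` tends to infinity at `0`
and is slowly varying at `0`, then `E max_{i < n} X i = g(1/n)(1 + o(1))`. -/
theorem expectation_max_iid
    {Ω : Type*} [MeasurableSpace Ω] (μ : Measure Ω) [IsProbabilityMeasure μ]
    (X : ℕ → Ω → ℝ) (hmeas : ∀ i, Measurable (X i))
    (hindep : iIndepFun X μ)
    (P : Measure ℝ) [IsProbabilityMeasure P]
    (hlaw : ∀ i, μ.map (X i) = P)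
    (hint : Integrable id P)
    (g : ℝ → ℝ)
    (hg : ∀ p : ℝ, 0 < p → p < 1 → g p = sInf {r : ℝ | (P (Set.Ici r)).toReal ≤ p})
    (hginf : Tendsto g (𝓝[>] 0) atTop)
    (hslow : ∀ c : ℝ, 0 < c → Tendsto (fun p => g (c * p) / g p) (𝓝[>] 0) (𝓝 1)) :
    Tendsto (fun n : ℕ => (∫ ω, (⨆ i : Fin n, X i ω) ∂μ) / g (1 / n)) atTop (𝓝 1) := by
  have hgQ : g =ᶠ[𝓝[>] 0] tailQuantile P := by
    filter_upwards [Ioo_mem_nhdsGT one_pos] with p hp using hg p hp.1 hp.2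
  have hinf := hginf.congr' hgQ
  have hQslow := SlowlyVaryingAtZero.congr hslow hgQ
  refine (tendsto_div_nhds_one_of_eventually (h := fun n : ℕ => tailQuantile P (1 / n))
    ((hinf.comp (tendsto_const_div_natCast_nhdsGT_zero one_pos)).eventually_gt_atTop 0)
    (fun a ha => eventually_mul_lt_integral_iSup hmeas hindep hlaw hint hinf hQslow ha)
    (fun a ha => eventually_integral_iSup_lt_mul hmeas hlaw hint hinf hQslow ha)).congr' ?_
  filter_upwards [(tendsto_const_div_natCast_nhdsGT_zero one_pos).eventually hgQ] with n hn
  rw [hn]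
end

section
/- Let (X_{ij})_{1≤i,j≤n} be i.i.d. integrable real random variables with common distribution P, let 𝓜_n = max_{π ∈ S_n} Σ_{i=1}^n X_{iπ(i)}, and for each k let E[M_k] denote the expected maximum of k i.i.d. random variables with distribution P. Then (via the greedy construction of a permutation) E[𝓜_n] ≥ Σ_{i=1}^n E[M_i]. -/
/-! Peel off the first row: for every column `j`, `𝓜_{n+1} ≥ X_{0j} + 𝓜_n(minor_j)`, where
the minor deletes row `0` and column `j`. Each minor is independent of the first row and is an
`n × n` i.i.d. array, so integrating out the other rows first gives, for a fixed first row `a`,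
`E[𝓜_{n+1} | a] ≥ max_j (a_j + E 𝓜_n) = max_j a_j + E 𝓜_n`: the supremum of the integrals is
below the integral of the supremum, so the greedy column never has to be selected measurably.
Hence `E 𝓜_{n+1} ≥ E M_{n+1} + E 𝓜_n`, and induction on `n` gives the bound. -/

open MeasureTheory ProbabilityTheory

noncomputable def assignmentMax {n : ℕ} (x : Fin n → Fin n → ℝ) : ℝ :=
  ⨆ π : Equiv.Perm (Fin n), ∑ i, x i (π i)

theorem add_assignmentMax_le {n : ℕ} (x : Fin (n + 1) → Fin (n + 1) → ℝ) (j : Fin (n + 1)) :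
    x 0 j + assignmentMax (fun i k => x i.succ (j.succAbove k)) ≤ assignmentMax x := by
  refine le_sub_iff_add_le'.mp (ciSup_le fun σ => le_sub_iff_add_le'.mpr ?_)
  -- the witness sends `0 ↦ j` and `i.succ ↦ j.succAbove (σ i)`
  refine le_ciSup_of_le (Set.finite_range _).bddAbove ((finSuccEquiv n).trans
    ((Equiv.optionCongr σ).trans (finSuccEquiv' j).symm)) ?_
  simp [Fin.sum_univ_succ]

theorem measurePreserving_comp_succAbove {n : ℕ} {α : Fin (n + 1) → Type*}
    [∀ i, MeasurableSpace (α i)] (μ : ∀ i, Measure (α i)) [∀ i, SigmaFinite (μ i)]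
    (j : Fin (n + 1)) [IsProbabilityMeasure (μ j)] :
    MeasurePreserving (fun (x : ∀ i, α i) k => x (j.succAbove k)) (Measure.pi μ)
      (Measure.pi fun k => μ (j.succAbove k)) :=
  measurePreserving_snd.comp (measurePreserving_piFinSuccAbove μ j)

theorem MeasureTheory.Measure.pi_map_curry {ι κ X : Type*} [Fintype ι] [Fintype κ]
    [MeasurableSpace X] (μ : ι → κ → Measure X) [∀ i j, IsProbabilityMeasure (μ i j)] :
    (Measure.pi fun p : ι × κ => μ p.1 p.2).map (MeasurableEquiv.curry ι κ X) =
      Measure.pi fun i => Measure.pi fun j => μ i j := by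
  simp_rw [← Measure.infinitePi_eq_pi]
  exact Measure.infinitePi_map_curry μ

theorem integrable_iSup {α ι : Type*} [MeasurableSpace α] {μ : Measure α} [Finite ι]
    [Nonempty ι] {f : ι → α → ℝ} (hf : ∀ i, Integrable (f i) μ) :
    Integrable (fun x => ⨆ i, f i x) μ := by
  have := Fintype.ofFinite ι
  refine (integrable_finsetSum Finset.univ fun i _ => (hf i).abs).mono'
    (AEMeasurable.iSup fun i => (hf i).aemeasurable).aestronglyMeasurable
    (.of_forall fun x => ?_)
  have hbdd : BddAbove (Set.range fun i => f i x) := (Set.finite_range _).bddAbove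
  have hle : ∀ i, |f i x| ≤ ∑ i, |f i x| := fun i =>
    Finset.single_le_sum (f := fun i => |f i x|) (fun _ _ => abs_nonneg _) (Finset.mem_univ i)
  obtain ⟨i₀⟩ := ‹Nonempty ι›
  rw [Real.norm_eq_abs, abs_le]
  exact ⟨(neg_le_neg (hle i₀)).trans ((neg_abs_le _).trans (le_ciSup hbdd i₀)),
    ciSup_le fun i => (le_abs_self _).trans (hle i)⟩

section IidMatrix

variable (P : Measure ℝ) [IsProbabilityMeasure P]

theorem integrable_eval_pi {ι : Type*} [Fintype ι] (hP : Integrable id P) (i : ι) :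
    Integrable (fun x : ι → ℝ => x i) (Measure.pi fun _ : ι => P) :=
  (measurePreserving_eval (fun _ : ι => P) i).integrable_comp_of_integrable hP

theorem integrable_entry {ι κ : Type*} [Fintype ι] [Fintype κ] (hP : Integrable id P) (i : ι)
    (j : κ) :
    Integrable (fun x : ι → κ → ℝ => x i j)
      (Measure.pi fun _ : ι => Measure.pi fun _ : κ => P) :=
  (measurePreserving_eval (fun _ : ι => Measure.pi fun _ : κ => P) i).integrable_comp_of_integrable
    (integrable_eval_pi P hP j)

theorem integrable_assignmentMax (hP : Integrable id P) (n : ℕ) :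
    Integrable assignmentMax (Measure.pi fun _ : Fin n => Measure.pi fun _ : Fin n => P) :=
  integrable_iSup fun π => integrable_finsetSum _ fun i _ => integrable_entry P hP i (π i)

theorem iSup_add_integral_assignmentMax_le_integral_cons (hP : Integrable id P) {n : ℕ}
    (a : Fin (n + 1) → ℝ)
    (ha : Integrable (fun r => assignmentMax (Fin.cons a r : Fin (n + 1) → Fin (n + 1) → ℝ))
      (Measure.pi fun _ : Fin n => Measure.pi fun _ : Fin (n + 1) => P)) :
    (⨆ j, a j) + ∫ x, assignmentMax x ∂(Measure.pi fun _ : Fin n => Measure.pi fun _ : Fin n => P)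
      ≤ ∫ r, assignmentMax (Fin.cons a r : Fin (n + 1) → Fin (n + 1) → ℝ)
          ∂(Measure.pi fun _ : Fin n => Measure.pi fun _ : Fin (n + 1) => P) := by
  set ρ := Measure.pi fun _ : Fin n => Measure.pi fun _ : Fin (n + 1) => P
  set ν := Measure.pi fun _ : Fin n => Measure.pi fun _ : Fin n => P
  refine le_sub_iff_add_le.mp (ciSup_le fun j => le_sub_iff_add_le.mpr ?_)
  have hminor : MeasurePreserving (fun (r : Fin n → Fin (n + 1) → ℝ) i k =>
      r i (j.succAbove k)) ρ ν :=
    measurePreserving_pi _ _ fun _ => measurePreserving_comp_succAbove _ j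
  have hint : Integrable (fun r => assignmentMax fun i k => r i (j.succAbove k)) ρ :=
    hminor.integrable_comp_of_integrable (integrable_assignmentMax P hP n)
  have hminor_integral :
      ∫ r, assignmentMax (fun i k => r i (j.succAbove k)) ∂ρ = ∫ x, assignmentMax x ∂ν := by
    have h : AEStronglyMeasurable assignmentMax ν :=
      (integrable_assignmentMax P hP n).aestronglyMeasurable
    rw [← hminor.map_eq] at h
    rw [← integral_map hminor.aemeasurable h, hminor.map_eq]
  calc a j + ∫ x, assignmentMax x ∂ν
      = ∫ r, a j + assignmentMax (fun i k => r i (j.succAbove k)) ∂ρ := by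
        rw [integral_add (integrable_const _) hint, hminor_integral, integral_const,
          probReal_univ, one_smul]
    _ ≤ _ := integral_mono ((integrable_const _).add hint) ha fun r =>
        add_assignmentMax_le (Fin.cons a r) j

theorem integral_iSup_add_integral_assignmentMax_le (hP : Integrable id P) (n : ℕ) :
    (∫ a, (⨆ j, a j) ∂(Measure.pi fun _ : Fin (n + 1) => P)) +
        ∫ x, assignmentMax x ∂(Measure.pi fun _ : Fin n => Measure.pi fun _ : Fin n => P) ≤
      ∫ x, assignmentMax x
        ∂(Measure.pi fun _ : Fin (n + 1) => Measure.pi fun _ : Fin (n + 1) => P) := by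
  set τ := Measure.pi fun _ : Fin (n + 1) => P
  set ρ := Measure.pi fun _ : Fin n => τ
  set c := ∫ x, assignmentMax x ∂(Measure.pi fun _ : Fin n => Measure.pi fun _ : Fin n => P)
  have hsplit := measurePreserving_piFinSuccAbove (fun _ : Fin (n + 1) => τ) 0
  have hcons (z : (Fin (n + 1) → ℝ) × (Fin n → Fin (n + 1) → ℝ)) :
      (MeasurableEquiv.piFinSuccAbove (fun _ => Fin (n + 1) → ℝ) 0).symm z = Fin.cons z.1 z.2 := by
    simp only [MeasurableEquiv.piFinSuccAbove, MeasurableEquiv.symm_mk, MeasurableEquiv.coe_mk,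
      Equiv.symm_symm, Fin.insertNthEquiv_zero]
    rfl
  have hF : Integrable (fun z => assignmentMax (Fin.cons z.1 z.2)) (τ.prod ρ) := by
    simpa only [Function.comp_def, hcons] using
      hsplit.symm.integrable_comp_of_integrable (integrable_assignmentMax P hP (n + 1))
  have hmax : Integrable (fun a => ⨆ j, a j) τ := integrable_iSup (integrable_eval_pi P hP)
  calc (∫ a, (⨆ j, a j) ∂τ) + c
      = ∫ a, (⨆ j, a j) + c ∂τ := by
        rw [integral_add hmax (integrable_const c), integral_const, probReal_univ, one_smul]
    _ ≤ ∫ a, ∫ r, assignmentMax (Fin.cons a r) ∂ρ ∂τ := by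
        refine integral_mono_ae (hmax.add (integrable_const c)) hF.integral_prod_left ?_
        filter_upwards [hF.prod_right_ae] with a ha
          using iSup_add_integral_assignmentMax_le_integral_cons P hP a ha
    _ = _ := by
        rw [← integral_prod _ hF, ← hsplit.symm.integral_comp']
        simp only [hcons, ρ]

theorem sum_integral_iSup_le_integral_assignmentMax (hP : Integrable id P) :
    ∀ n : ℕ, ∑ k ∈ Finset.range n,
        ∫ a, (⨆ i : Fin (k + 1), a i) ∂(Measure.pi fun _ : Fin (k + 1) => P) ≤
      ∫ x, assignmentMax x ∂(Measure.pi fun _ : Fin n => Measure.pi fun _ : Fin n => P)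
  | 0 => by simp [assignmentMax]
  | n + 1 => by
    rw [Finset.sum_range_succ]
    linarith [sum_integral_iSup_le_integral_assignmentMax hP n,
      integral_iSup_add_integral_assignmentMax_le P hP n]

end IidMatrix

theorem map_eq_pi_pi_of_iIndepFun {Ω ι κ β : Type*} [MeasurableSpace Ω] [Fintype ι]
    [Fintype κ] [MeasurableSpace β] {μ : Measure Ω} {X : ι → κ → Ω → β}
    (hX : ∀ i j, Measurable (X i j)) (hindep : iIndepFun (fun p : ι × κ => X p.1 p.2) μ)
    (P : Measure β) [IsProbabilityMeasure P] (hlaw : ∀ i j, μ.map (X i j) = P) :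
    μ.map (fun ω i j => X i j ω) = Measure.pi fun _ : ι => Measure.pi fun _ : κ => P := by
  have hpairs : μ.map (fun ω (p : ι × κ) => X p.1 p.2 ω) = Measure.pi fun _ => P := by
    rw [hindep.map_fun_eq_pi_map fun p : ι × κ => (hX p.1 p.2).aemeasurable]
    simp only [hlaw]
  have hpairs_meas : Measurable fun ω (p : ι × κ) => X p.1 p.2 ω :=
    measurable_pi_lambda _ fun p => hX p.1 p.2
  rw [← Measure.pi_map_curry, ← hpairs,
    Measure.map_map (MeasurableEquiv.measurable _) hpairs_meas]
  rfl

theorem sum_expectation_max_le_expectation_assignment_max_general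
    {Ω : Type*} [MeasurableSpace Ω] (μ : Measure Ω)
    (n : ℕ)
    (X : Fin n → Fin n → Ω → ℝ) (hmeas : ∀ i j, Measurable (X i j))
    (hindep : iIndepFun (fun p : Fin n × Fin n => X p.1 p.2) μ)
    (P : Measure ℝ) [IsProbabilityMeasure P]
    (hlaw : ∀ i j, μ.map (X i j) = P)
    (hint : Integrable id P) :
    ∑ k ∈ Finset.range n,
        ∫ x, (⨆ i : Fin (k + 1), x i) ∂(Measure.pi fun _ : Fin (k + 1) => P) ≤
      ∫ ω, (⨆ π : Equiv.Perm (Fin n), ∑ i, X i (π i) ω) ∂μ := by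
  have hT : Measurable fun ω i j => X i j ω :=
    measurable_pi_lambda _ fun i => measurable_pi_lambda _ fun j => hmeas i j
  have hlawT := map_eq_pi_pi_of_iIndepFun hmeas hindep P hlaw
  have hA : AEStronglyMeasurable assignmentMax (μ.map fun ω i j => X i j ω) := by
    rw [hlawT]
    exact (integrable_assignmentMax P hint n).aestronglyMeasurable
  calc _ ≤ ∫ x, assignmentMax x
          ∂(Measure.pi fun _ : Fin n => Measure.pi fun _ : Fin n => P) :=
        sum_integral_iSup_le_integral_assignmentMax P hint n
    _ = ∫ x, assignmentMax x ∂(μ.map fun ω i j => X i j ω) := by rw [hlawT]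
    _ = _ := integral_map hT.aemeasurable hA

/-- **Greedy lower bound for the assignment maximum.**
For an `n × n` array of i.i.d. integrable real random variables with common law `P`,
`E 𝓜_n ≥ ∑_{k=1}^n E M_k`, where `E M_k = ∫ max_{i < k} x i dP^⊗k` is the expected
maximum of `k` i.i.d. random variables with law `P`. -/
theorem sum_expectation_max_le_expectation_assignment_max
    {Ω : Type*} [MeasurableSpace Ω] (μ : Measure Ω) [IsProbabilityMeasure μ]
    (n : ℕ)
    (X : Fin n → Fin n → Ω → ℝ) (hmeas : ∀ i j, Measurable (X i j))
    (hindep : iIndepFun (fun p : Fin n × Fin n => X p.1 p.2) μ)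
    (P : Measure ℝ) [IsProbabilityMeasure P]
    (hlaw : ∀ i j, μ.map (X i j) = P)
    (hint : Integrable id P) :
    ∑ k ∈ Finset.range n,
        ∫ x, (⨆ i : Fin (k + 1), x i) ∂(Measure.pi fun _ : Fin (k + 1) => P) ≤
      ∫ ω, (⨆ π : Equiv.Perm (Fin n), ∑ i, X i (π i) ω) ∂μ :=
  sum_expectation_max_le_expectation_assignment_max_general μ n X hmeas hindep P hlaw hint
end

section
/- Let (X_{ij}) be an n×n array of i.i.d. real random variables with E|X| < ∞, quantile function g(p) = inf{r : P(X ≥ r) ≤ p} tending to ∞ and slowly varying at 0, and 𝓜_n = max_{π ∈ S_n} Σ_{i=1}^n X_{iπ(i)}. Then limsup_{n→∞} E[𝓜_n]/(n·g(1/n)) ≤ 1. -/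
/-!
Bounding every entry of a permutation by `r` plus its excess over `r` gives
`𝓜_n ≤ n r + ∑_{i,j} (X_{ij} - r)⁺`, hence `E 𝓜_n ≤ n r + n² E (X - r)⁺`; take `r = g(1/(2n))`.
Slow variation lets the quantiles `g(2^{-k} δ)` grow by at most a factor `1 + η` per halving of
`δ`, while `P(X > g(2^{-k} δ)) ≤ 2^{-k} δ`; summing over these layers gives
`E (X - g δ)⁺ ≤ 4 η δ g(δ)`, i.e. `E (X - g δ)⁺ = o(δ g(δ))`. Therefore
`E 𝓜_n ≤ (1 + o(1)) n g(1/(2n)) = (1 + o(1)) n g(1/n)`, and `E 𝓜_n ≥ n E X` keeps the ratio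
bounded below.
-/

open MeasureTheory ProbabilityTheory Filter Topology Set

namespace RandomAssignment

lemma limsup_le_of_squeeze {α : Type*} {l : Filter α} [l.NeBot] {u v w : α → ℝ} {a c : ℝ}
    (hw : Tendsto w l (𝓝 a)) (hv : Tendsto v l (𝓝 c)) (hwu : w ≤ᶠ[l] u) (huv : u ≤ᶠ[l] v) :
    limsup u l ≤ c :=
  (limsup_le_limsup huv (hw.isBoundedUnder_ge.mono_ge hwu).isCoboundedUnder_le
    hv.isBoundedUnder_le).trans_eq hv.limsup_eq

lemma tendsto_one_div_natCast_nhdsGT_zero :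
    Tendsto (fun n : ℕ => 1 / (n : ℝ)) atTop (𝓝[>] 0) := by
  simpa only [one_div, Function.comp_def] using
    tendsto_inv_atTop_nhdsGT_zero.comp tendsto_natCast_atTop_atTop

lemma tendsto_const_mul_nhdsGT_zero {c : ℝ} (hc : 0 < c) :
    Tendsto (fun p => c * p) (𝓝[>] 0) (𝓝[>] 0) :=
  tendsto_iff_comap.2 (comap_mulLeft_nhdsGT_zero hc).ge

lemma sum_range_sub_mul_le_of_geometric {r q : ℕ → ℝ} {η δ : ℝ} (hη : 0 ≤ η) (hη' : η ≤ 1 / 2)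
    (hr : Monotone r) (hr0 : 0 ≤ r 0) (hstep : ∀ k, r (k + 1) ≤ (1 + η) * r k)
    (hq : ∀ k, 0 ≤ q k) (hq' : ∀ k, q k ≤ (1 / 2) ^ k * δ) (K : ℕ) :
    ∑ k ∈ Finset.range K, (r (k + 1) - r k) * q k ≤ 4 * η * δ * r 0 := by
  have hδ : 0 ≤ δ := by simpa using (hq 0).trans (hq' 0)
  have hgrow : ∀ k, r k ≤ (1 + η) ^ k * r 0 := by
    intro k
    induction k with
    | zero => simp
    | succ k ih =>
      calc r (k + 1) ≤ (1 + η) * r k := hstep k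
        _ ≤ (1 + η) * ((1 + η) ^ k * r 0) := by gcongr
        _ = (1 + η) ^ (k + 1) * r 0 := by ring
  have hterm : ∀ k, (r (k + 1) - r k) * q k ≤ η * δ * r 0 * ((1 + η) / 2) ^ k := by
    intro k
    have hinc : r (k + 1) - r k ≤ η * ((1 + η) ^ k * r 0) := by
      nlinarith [hstep k, hgrow k]
    calc (r (k + 1) - r k) * q k ≤ η * ((1 + η) ^ k * r 0) * ((1 / 2) ^ k * δ) :=
          mul_le_mul hinc (hq' k) (hq k) (by linarith [hr k.le_succ])
      _ = η * δ * r 0 * ((1 + η) / 2) ^ k := by simp only [div_pow]; ring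
  have hgeom : ∑ k ∈ Finset.range K, ((1 + η) / 2) ^ k ≤ 4 := by
    rw [Finset.range_eq_Ico]
    refine (geom_sum_Ico_le_of_lt_one (by positivity) (by linarith)).trans ?_
    rw [pow_zero, div_le_iff₀ (by linarith)]
    linarith
  calc ∑ k ∈ Finset.range K, (r (k + 1) - r k) * q k
      ≤ ∑ k ∈ Finset.range K, η * δ * r 0 * ((1 + η) / 2) ^ k :=
        Finset.sum_le_sum fun k _ => hterm k
    _ = η * δ * r 0 * ∑ k ∈ Finset.range K, ((1 + η) / 2) ^ k := by rw [Finset.mul_sum]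
    _ ≤ η * δ * r 0 * 4 := by gcongr
    _ = 4 * η * δ * r 0 := by ring

noncomputable def tailQuantile (P : Measure ℝ) (p : ℝ) : ℝ := sInf {r : ℝ | P.real (Ici r) ≤ p}

section Quantile

variable {P : Measure ℝ} [IsProbabilityMeasure P] {p p' s : ℝ}

lemma tendsto_measureReal_Ici_atTop : Tendsto (fun x => P.real (Ici x)) atTop (𝓝 0) := by
  have hempty : ⋂ x : ℝ, Ici x = ∅ :=
    eq_empty_of_forall_notMem fun y hy => not_le.2 (lt_add_one y) (mem_iInter.1 hy (y + 1))
  have h := tendsto_measure_iInter_atTop (μ := P) (fun _ => measurableSet_Ici.nullMeasurableSet)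
    antitone_Ici ⟨0, measure_ne_top _ _⟩
  rw [hempty, measure_empty] at h
  have h' := (ENNReal.tendsto_toReal ENNReal.zero_ne_top).comp h
  rwa [ENNReal.toReal_zero] at h'

lemma tendsto_measureReal_Ici_atBot : Tendsto (fun x => P.real (Ici x)) atBot (𝓝 1) := by
  have h := (ENNReal.tendsto_toReal (measure_ne_top P univ)).comp (tendsto_measure_Ici_atBot P)
  rwa [measure_univ, ENNReal.toReal_one] at h

lemma nonempty_tailQuantile_set (hp : 0 < p) : {r : ℝ | P.real (Ici r) ≤ p}.Nonempty :=
  (tendsto_measureReal_Ici_atTop (P := P) |>.eventually (eventually_le_nhds hp)).exists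

lemma bddBelow_tailQuantile_set (hp : p < 1) : BddBelow {r : ℝ | P.real (Ici r) ≤ p} := by
  obtain ⟨b, hb⟩ :=
    eventually_atBot.1 ((tendsto_measureReal_Ici_atBot (P := P)).eventually (eventually_gt_nhds hp))
  exact ⟨b, fun r hr => le_of_not_gt fun hrb => (hb r hrb.le).not_ge hr⟩

lemma measureReal_Ici_le_of_tailQuantile_lt (hp : 0 < p) (hs : tailQuantile P p < s) :
    P.real (Ici s) ≤ p := by
  obtain ⟨r, hr, hrs⟩ := exists_lt_of_csInf_lt (nonempty_tailQuantile_set hp) hs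
  exact (measureReal_mono (Ici_subset_Ici.2 hrs.le)).trans hr

lemma measureReal_Ioi_tailQuantile_le (hp : 0 < p) : P.real (Ioi (tailQuantile P p)) ≤ p := by
  set a := tailQuantile P p
  have hlt : ∀ n : ℕ, a < a + 1 / (n + 1) := fun n => lt_add_of_pos_right a Nat.one_div_pos_of_nat
  have hunion : ⋃ n : ℕ, Ici (a + 1 / (n + 1)) = Ioi a :=
    iUnion_Ici_eq_Ioi_of_lt_of_tendsto hlt
      (by simpa using tendsto_one_div_add_atTop_nhds_zero_nat.const_add a)
  have hmono : Monotone fun n : ℕ => Ici (a + 1 / ((n : ℝ) + 1)) :=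
    fun m n hmn => Ici_subset_Ici.2 (by gcongr)
  have h := (ENNReal.tendsto_toReal (measure_ne_top _ _)).comp
    (tendsto_measure_iUnion_atTop (μ := P) hmono)
  rw [hunion] at h
  exact le_of_tendsto' h fun n => measureReal_Ici_le_of_tailQuantile_lt hp (hlt n)

lemma tailQuantile_anti (hp : 0 < p) (hpp' : p ≤ p') (hp' : p' < 1) :
    tailQuantile P p' ≤ tailQuantile P p :=
  csInf_le_csInf (bddBelow_tailQuantile_set hp') (nonempty_tailQuantile_set hp)
    fun _ hr => le_trans hr hpp'

end Quantile

noncomputable def stopLoss (P : Measure ℝ) (r : ℝ) : ℝ := ∫ x, max (x - r) 0 ∂P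

lemma stopLoss_nonneg (P : Measure ℝ) (r : ℝ) : 0 ≤ stopLoss P r :=
  integral_nonneg fun _ => le_max_right _ _

section StopLoss

variable {P : Measure ℝ} [IsFiniteMeasure P]

lemma integrable_max_sub_const (hint : Integrable id P) (r : ℝ) :
    Integrable (fun x => max (x - r) 0) P :=
  (hint.sub (integrable_const r)).pos_part

lemma stopLoss_le_add_mul_measureReal_Ioi (hint : Integrable id P) (a b : ℝ) :
    stopLoss P a ≤ stopLoss P b + (b - a) * P.real (Ioi a) := by
  have hind : Integrable ((Ioi a).indicator fun _ => b - a) P :=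
    (integrable_const _).indicator measurableSet_Ioi
  calc stopLoss P a ≤ ∫ x, (max (x - b) 0 + (Ioi a).indicator (fun _ => b - a) x) ∂P := by
        refine integral_mono (integrable_max_sub_const hint a)
          ((integrable_max_sub_const hint b).add hind) fun x => ?_
        have hle := le_max_left (x - b) 0
        have hnonneg := le_max_right (x - b) 0
        by_cases hx : a < x
        · rw [indicator_of_mem (show x ∈ Ioi a from hx)]
          exact max_le (by linarith) (by linarith)
        · rw [indicator_of_notMem (show x ∉ Ioi a from hx)]
          exact max_le (by linarith [not_lt.1 hx]) (by linarith)
    _ = stopLoss P b + (b - a) * P.real (Ioi a) := by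
        rw [integral_add (integrable_max_sub_const hint b) hind,
          integral_indicator_const _ measurableSet_Ioi, smul_eq_mul, mul_comm]
        rfl

lemma tendsto_stopLoss_atTop (hint : Integrable id P) : Tendsto (stopLoss P) atTop (𝓝 0) := by
  have hbound : ∀ᶠ r in atTop, ∀ᵐ x ∂P, ‖max (x - r) 0‖ ≤ |x| := by
    filter_upwards [eventually_ge_atTop 0] with r hr
    refine ae_of_all _ fun x => ?_
    rw [Real.norm_of_nonneg (le_max_right _ _)]
    exact max_le (by linarith [le_abs_self x]) (abs_nonneg x)
  have hlim : ∀ᵐ x ∂P, Tendsto (fun r => max (x - r) 0) atTop (𝓝 0) :=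
    ae_of_all _ fun x => tendsto_const_nhds.congr' <| by
      filter_upwards [eventually_ge_atTop x] with r hr
      rw [max_eq_right (by linarith)]
  show Tendsto (fun r => ∫ x, max (x - r) 0 ∂P) atTop (𝓝 0)
  simpa using tendsto_integral_filter_of_dominated_convergence _
    (Eventually.of_forall fun r => (integrable_max_sub_const hint r).aestronglyMeasurable)
    hbound hint.abs hlim

lemma stopLoss_le_sum_range_add (hint : Integrable id P) (r : ℕ → ℝ) (K : ℕ) :
    stopLoss P (r 0) ≤
      ∑ k ∈ Finset.range K, (r (k + 1) - r k) * P.real (Ioi (r k)) + stopLoss P (r K) := by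
  induction K with
  | zero => simp
  | succ K ih =>
    rw [Finset.sum_range_succ]
    linarith [stopLoss_le_add_mul_measureReal_Ioi hint (r K) (r (K + 1))]

lemma stopLoss_le_of_geometric_tail (hint : Integrable id P) {r : ℕ → ℝ} {η δ : ℝ} (hη : 0 ≤ η)
    (hη' : η ≤ 1 / 2) (hr : Monotone r) (hr0 : 0 ≤ r 0) (hstep : ∀ k, r (k + 1) ≤ (1 + η) * r k)
    (htail : ∀ k, P.real (Ioi (r k)) ≤ (1 / 2) ^ k * δ) (hlim : Tendsto r atTop atTop) :
    stopLoss P (r 0) ≤ 4 * η * δ * r 0 := by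
  have hbound : Tendsto (fun K => 4 * η * δ * r 0 + stopLoss P (r K)) atTop
      (𝓝 (4 * η * δ * r 0)) := by
    simpa using tendsto_const_nhds.add ((tendsto_stopLoss_atTop hint).comp hlim)
  exact ge_of_tendsto' hbound fun K => (stopLoss_le_sum_range_add hint r K).trans <|
    add_le_add_left (sum_range_sub_mul_le_of_geometric hη hη' hr hr0 hstep
      (fun _ => measureReal_nonneg) htail K) _

end StopLoss

section SlowVariation

variable {P : Measure ℝ} [IsProbabilityMeasure P] {g : ℝ → ℝ}

lemma stopLoss_le_of_half_pow_le (hint : Integrable id P)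
    (hg : ∀ p, 0 < p → p < 1 → g p = tailQuantile P p) (hginf : Tendsto g (𝓝[>] 0) atTop)
    {η δ : ℝ} (hη : 0 ≤ η) (hη' : η ≤ 1 / 2) (hδ : 0 < δ) (hδ' : δ < 1) (hgδ : 0 ≤ g δ)
    (hstep : ∀ k : ℕ, g ((1 / 2) ^ (k + 1) * δ) ≤ (1 + η) * g ((1 / 2) ^ k * δ)) :
    stopLoss P (g δ) ≤ 4 * η * δ * g δ := by
  have hpos : ∀ k : ℕ, 0 < (1 / 2 : ℝ) ^ k * δ := fun k => by positivity
  have hlt : ∀ k : ℕ, (1 / 2 : ℝ) ^ k * δ < 1 := fun k =>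
    (mul_le_of_le_one_left hδ.le (pow_le_one₀ (by norm_num) (by norm_num))).trans_lt hδ'
  have hq : ∀ k : ℕ, g ((1 / 2) ^ k * δ) = tailQuantile P ((1 / 2) ^ k * δ) := fun k =>
    hg _ (hpos k) (hlt k)
  have hr : Monotone fun k : ℕ => g ((1 / 2) ^ k * δ) := monotone_nat_of_le_succ fun k => by
    simp only [hq]
    exact tailQuantile_anti (hpos (k + 1))
      (mul_le_mul_of_nonneg_right (pow_le_pow_of_le_one (by norm_num) (by norm_num) k.le_succ)
        hδ.le) (hlt k)
  have htail : ∀ k : ℕ, P.real (Ioi (g ((1 / 2) ^ k * δ))) ≤ (1 / 2) ^ k * δ := fun k => by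
    simp only [hq]
    exact measureReal_Ioi_tailQuantile_le (hpos k)
  have hlim : Tendsto (fun k : ℕ => g ((1 / 2) ^ k * δ)) atTop atTop := by
    refine hginf.comp (tendsto_nhdsWithin_iff.2 ⟨?_, Eventually.of_forall hpos⟩)
    simpa using (tendsto_pow_atTop_nhds_zero_of_lt_one (by norm_num : (0 : ℝ) ≤ 1 / 2)
      (by norm_num)).mul_const δ
  simpa using stopLoss_le_of_geometric_tail hint hη hη' hr (by simpa using hgδ) hstep htail hlim

lemma eventually_stopLoss_le (hint : Integrable id P)
    (hg : ∀ p, 0 < p → p < 1 → g p = tailQuantile P p) (hginf : Tendsto g (𝓝[>] 0) atTop)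
    (hhalf : Tendsto (fun p => g (1 / 2 * p) / g p) (𝓝[>] 0) (𝓝 1)) {η : ℝ} (hη : 0 < η)
    (hη' : η ≤ 1 / 2) : ∀ᶠ δ in 𝓝[>] 0, stopLoss P (g δ) ≤ 4 * η * δ * g δ := by
  have hev : ∀ᶠ x in 𝓝[>] (0 : ℝ), x < 1 ∧ 0 < g x ∧ g (1 / 2 * x) / g x < 1 + η :=
    (eventually_nhdsWithin_of_eventually_nhds (eventually_lt_nhds one_pos)).and <|
      (hginf.eventually_gt_atTop 0).and (hhalf.eventually (eventually_lt_nhds (by linarith)))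
  obtain ⟨δ₀, hδ₀, hgood⟩ := (nhdsGT_basis (0 : ℝ)).eventually_iff.1 hev
  filter_upwards [Ioo_mem_nhdsGT hδ₀] with δ hδ
  refine stopLoss_le_of_half_pow_le hint hg hginf hη.le hη' hδ.1 (hgood hδ).1 (hgood hδ).2.1.le
    fun k => ?_
  have hmem : (1 / 2 : ℝ) ^ k * δ ∈ Ioo 0 δ₀ := ⟨by have := hδ.1; positivity,
    (mul_le_of_le_one_left hδ.1.le (pow_le_one₀ (by norm_num) (by norm_num))).trans_lt hδ.2⟩
  obtain ⟨-, hgk, hratio⟩ := hgood hmem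
  rw [div_lt_iff₀ hgk] at hratio
  rw [pow_succ', mul_assoc]
  exact hratio.le

theorem stopLoss_isLittleO (hint : Integrable id P)
    (hg : ∀ p, 0 < p → p < 1 → g p = tailQuantile P p) (hginf : Tendsto g (𝓝[>] 0) atTop)
    (hhalf : Tendsto (fun p => g (1 / 2 * p) / g p) (𝓝[>] 0) (𝓝 1)) :
    (fun δ => stopLoss P (g δ)) =o[𝓝[>] 0] fun δ => δ * g δ := by
  refine Asymptotics.IsLittleO.of_bound fun c hc => ?_
  filter_upwards [self_mem_nhdsWithin, hginf.eventually_gt_atTop 0,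
    eventually_stopLoss_le hint hg hginf hhalf (η := min (c / 4) (1 / 2)) (by positivity)
      (min_le_right _ _)] with δ (hδ : 0 < δ) hgδ hT
  rw [Real.norm_of_nonneg (stopLoss_nonneg P _), Real.norm_of_nonneg (by positivity)]
  calc stopLoss P (g δ) ≤ 4 * min (c / 4) (1 / 2) * δ * g δ := hT
    _ ≤ 4 * (c / 4) * δ * g δ := by gcongr; exact min_le_left _ _
    _ = c * (δ * g δ) := by ring

/-- At `p = 1 / n` the ratio is `(n r + n² E (X - r)⁺) / (n g(1/n))` with `r = g(1/(2n))`. -/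
theorem tendsto_quantile_add_stopLoss_div (hint : Integrable id P)
    (hg : ∀ p, 0 < p → p < 1 → g p = tailQuantile P p) (hginf : Tendsto g (𝓝[>] 0) atTop)
    (hhalf : Tendsto (fun p => g (1 / 2 * p) / g p) (𝓝[>] 0) (𝓝 1)) :
    Tendsto (fun p => (g (1 / 2 * p) + stopLoss P (g (1 / 2 * p)) / p) / g p) (𝓝[>] 0) (𝓝 1) := by
  have hscale := tendsto_const_mul_nhdsGT_zero (one_half_pos (α := ℝ))
  have hexcess := (stopLoss_isLittleO hint hg hginf hhalf).tendsto_div_nhds_zero.comp hscale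
  have h := hhalf.mul ((tendsto_const_nhds (x := (1 : ℝ))).add
    ((tendsto_const_nhds (x := (1 / 2 : ℝ))).mul hexcess))
  rw [mul_zero, add_zero, mul_one] at h
  refine h.congr' ?_
  filter_upwards [self_mem_nhdsWithin, hscale.eventually (hginf.eventually_gt_atTop 0)]
    with p (hp : 0 < p) hgp
  simp only [Function.comp_apply]
  generalize g (1 / 2 * p) = r at hgp ⊢
  field_simp

end SlowVariation

section Assignment

variable {ι Ω : Type*} [Fintype ι]

noncomputable def assignmentMax (Y : ι → ι → Ω → ℝ) (ω : Ω) : ℝ :=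
  ⨆ π : Equiv.Perm ι, ∑ i, Y i (π i) ω

lemma sum_le_assignmentMax (Y : ι → ι → Ω → ℝ) (π : Equiv.Perm ι) (ω : Ω) :
    ∑ i, Y i (π i) ω ≤ assignmentMax Y ω :=
  le_ciSup (f := fun π : Equiv.Perm ι => ∑ i, Y i (π i) ω) (Set.finite_range _).bddAbove π

lemma assignmentMax_le_card_mul_add (Y : ι → ι → Ω → ℝ) (r : ℝ) (ω : Ω) :
    assignmentMax Y ω ≤ Fintype.card ι * r + ∑ i, ∑ j, max (Y i j ω - r) 0 := by
  refine ciSup_le fun π => ?_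
  calc ∑ i, Y i (π i) ω ≤ ∑ i, (r + ∑ j, max (Y i j ω - r) 0) := by
        refine Finset.sum_le_sum fun i _ => ?_
        have hrow := Finset.single_le_sum (f := fun j => max (Y i j ω - r) 0)
          (fun j _ => le_max_right _ _) (Finset.mem_univ (π i))
        linarith [le_max_left (Y i (π i) ω - r) 0]
    _ = Fintype.card ι * r + ∑ i, ∑ j, max (Y i j ω - r) 0 := by
        rw [Finset.sum_add_distrib, Finset.sum_const, Finset.card_univ, nsmul_eq_mul]

variable [MeasurableSpace Ω] {μ : Measure Ω} {P : Measure ℝ} {Y : ι → ι → Ω → ℝ}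

lemma integrable_comp_of_map_eq {Z : Ω → ℝ} (hZ : Measurable Z) (hlaw : μ.map Z = P)
    {f : ℝ → ℝ} (hf : Integrable f P) : Integrable (fun ω => f (Z ω)) μ := by
  subst hlaw
  exact hf.comp_measurable hZ

lemma integral_comp_of_map_eq {Z : Ω → ℝ} (hZ : Measurable Z) (hlaw : μ.map Z = P)
    {f : ℝ → ℝ} (hf : AEStronglyMeasurable f P) : ∫ ω, f (Z ω) ∂μ = ∫ x, f x ∂P := by
  subst hlaw
  exact (integral_map hZ.aemeasurable hf).symm

lemma measurable_assignmentMax (hY : ∀ i j, Measurable (Y i j)) : Measurable (assignmentMax Y) :=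
  Measurable.iSup fun π => Finset.measurable_sum _ fun i _ => hY i (π i)

lemma integrable_assignmentMax [IsFiniteMeasure μ] [IsFiniteMeasure P]
    (hY : ∀ i j, Measurable (Y i j)) (hlaw : ∀ i j, μ.map (Y i j) = P) (hint : Integrable id P) :
    Integrable (assignmentMax Y) μ :=
  integrable_of_le_of_le (measurable_assignmentMax hY).aestronglyMeasurable
    (ae_of_all _ (sum_le_assignmentMax Y 1)) (ae_of_all _ (assignmentMax_le_card_mul_add Y 0))
    (integrable_finsetSum _ fun i _ => integrable_comp_of_map_eq (hY i i) (hlaw i i) hint)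
    ((integrable_const _).add (integrable_finsetSum _ fun i _ => integrable_finsetSum _ fun j _ =>
      integrable_comp_of_map_eq (hY i j) (hlaw i j) (integrable_max_sub_const hint 0)))

lemma integral_assignmentMax_le [IsProbabilityMeasure μ] [IsFiniteMeasure P]
    (hY : ∀ i j, Measurable (Y i j)) (hlaw : ∀ i j, μ.map (Y i j) = P) (hint : Integrable id P)
    (r : ℝ) :
    ∫ ω, assignmentMax Y ω ∂μ ≤ Fintype.card ι * r + Fintype.card ι ^ 2 * stopLoss P r := by
  have hexcess : ∀ i j, Integrable (fun ω => max (Y i j ω - r) 0) μ := fun i j =>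
    integrable_comp_of_map_eq (hY i j) (hlaw i j) (integrable_max_sub_const hint r)
  have hstop : ∀ i j, ∫ ω, max (Y i j ω - r) 0 ∂μ = stopLoss P r := fun i j =>
    integral_comp_of_map_eq (f := fun x => max (x - r) 0) (hY i j) (hlaw i j)
      (integrable_max_sub_const hint r).aestronglyMeasurable
  calc ∫ ω, assignmentMax Y ω ∂μ
      ≤ ∫ ω, (Fintype.card ι * r + ∑ i, ∑ j, max (Y i j ω - r) 0) ∂μ :=
        integral_mono (integrable_assignmentMax hY hlaw hint)
          ((integrable_const _).add (integrable_finsetSum _ fun i _ =>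
            integrable_finsetSum _ fun j _ => hexcess i j))
          (assignmentMax_le_card_mul_add Y r)
    _ = Fintype.card ι * r + Fintype.card ι ^ 2 * stopLoss P r := by
        rw [integral_add (integrable_const _) (integrable_finsetSum _ fun i _ =>
            integrable_finsetSum _ fun j _ => hexcess i j),
          integral_finsetSum _ fun i _ => integrable_finsetSum _ fun j _ => hexcess i j]
        simp [integral_finsetSum _ fun j _ => hexcess _ j, hstop]
        ring

lemma card_mul_integral_le_integral_assignmentMax [IsFiniteMeasure μ] [IsFiniteMeasure P]
    (hY : ∀ i j, Measurable (Y i j)) (hlaw : ∀ i j, μ.map (Y i j) = P) (hint : Integrable id P) :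
    Fintype.card ι * ∫ x, x ∂P ≤ ∫ ω, assignmentMax Y ω ∂μ := by
  have hdiag : ∀ i, Integrable (Y i i) μ := fun i =>
    integrable_comp_of_map_eq (hY i i) (hlaw i i) hint
  have hmean : ∀ i, ∫ ω, Y i i ω ∂μ = ∫ x, x ∂P := fun i =>
    integral_comp_of_map_eq (f := id) (hY i i) (hlaw i i) aestronglyMeasurable_id
  calc Fintype.card ι * ∫ x, x ∂P = ∫ ω, ∑ i, Y i i ω ∂μ := by
        rw [integral_finsetSum _ fun i _ => hdiag i]
        simp [hmean]
    _ ≤ ∫ ω, assignmentMax Y ω ∂μ :=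
        integral_mono (integrable_finsetSum _ fun i _ => hdiag i)
          (integrable_assignmentMax hY hlaw hint) (sum_le_assignmentMax Y 1)

end Assignment

end RandomAssignment

open RandomAssignment

theorem limsup_expectation_max_assignment_general
    {Ω : ℕ → Type*} [∀ n, MeasurableSpace (Ω n)]
    (μ : ∀ n, Measure (Ω n)) [∀ n, IsProbabilityMeasure (μ n)]
    (X : ∀ n, Fin n → Fin n → Ω n → ℝ)
    (hmeas : ∀ n i j, Measurable (X n i j))
    (P : Measure ℝ) [IsProbabilityMeasure P]
    (hlaw : ∀ n i j, (μ n).map (X n i j) = P)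
    (hint : Integrable id P)
    (g : ℝ → ℝ)
    (hg : ∀ p : ℝ, 0 < p → p < 1 → g p = sInf {r : ℝ | (P (Set.Ici r)).toReal ≤ p})
    (hginf : Tendsto g (𝓝[>] 0) atTop)
    (hslow : ∀ c : ℝ, 0 < c → Tendsto (fun p => g (c * p) / g p) (𝓝[>] 0) (𝓝 1)) :
    Filter.limsup
      (fun n : ℕ =>
        (∫ ω, (⨆ π : Equiv.Perm (Fin n), ∑ i, X n i (π i) ω) ∂(μ n)) / ((n : ℝ) * g (1 / n)))
      atTop ≤ 1 := by
  have hseq := tendsto_one_div_natCast_nhdsGT_zero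
  have hgpos : ∀ᶠ n : ℕ in atTop, 0 < g (1 / n) := hseq.eventually (hginf.eventually_gt_atTop 0)
  refine limsup_le_of_squeeze
    ((tendsto_const_nhds (x := ∫ x, x ∂P)).div_atTop (hginf.comp hseq))
    ((tendsto_quantile_add_stopLoss_div hint hg hginf (hslow _ one_half_pos)).comp hseq) ?_ ?_
  · filter_upwards [hgpos, eventually_gt_atTop 0] with n hgn hn
    have hlow := card_mul_integral_le_integral_assignmentMax (μ := μ n) (hmeas n) (hlaw n) hint
    rw [Fintype.card_fin] at hlow
    rw [Function.comp_apply, ← mul_div_mul_left _ _ (Nat.cast_ne_zero.2 hn.ne')]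
    exact div_le_div_of_nonneg_right hlow (by positivity)
  · filter_upwards [hgpos, eventually_gt_atTop 0] with n hgn hn
    have hup := integral_assignmentMax_le (μ := μ n) (hmeas n) (hlaw n) hint (g (1 / 2 * (1 / n)))
    rw [Fintype.card_fin] at hup
    calc _ ≤ _ := div_le_div_of_nonneg_right hup (by positivity)
      _ = _ := by
        simp only [Function.comp_apply]
        field_simp

/-- **Maximum of the random assignment process** (Theorem 1, part (2)).
For each `n`, let `(X n i j)` be an `n × n` array of i.i.d. real random variables with
common law `P`, `E|X| < ∞`, and assume the tail quantile function
`g p = inf {r : P(X ≥ r) ≤ p}` tends to infinity at `0` and is slowly varying at `0`.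
Then `limsup_{n → ∞} E 𝓜_n / (n g(1/n)) ≤ 1`. -/
theorem limsup_expectation_max_assignment
    {Ω : ℕ → Type*} [∀ n, MeasurableSpace (Ω n)]
    (μ : ∀ n, Measure (Ω n)) [∀ n, IsProbabilityMeasure (μ n)]
    (X : ∀ n, Fin n → Fin n → Ω n → ℝ)
    (hmeas : ∀ n i j, Measurable (X n i j))
    (hindep : ∀ n, iIndepFun
      (fun p : Fin n × Fin n => X n p.1 p.2) (μ n))
    (P : Measure ℝ) [IsProbabilityMeasure P]
    (hlaw : ∀ n i j, (μ n).map (X n i j) = P)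
    (hint : Integrable id P)
    (g : ℝ → ℝ)
    (hg : ∀ p : ℝ, 0 < p → p < 1 → g p = sInf {r : ℝ | (P (Set.Ici r)).toReal ≤ p})
    (hginf : Tendsto g (𝓝[>] 0) atTop)
    (hslow : ∀ c : ℝ, 0 < c → Tendsto (fun p => g (c * p) / g p) (𝓝[>] 0) (𝓝 1)) :
    Filter.limsup
      (fun n : ℕ =>
        (∫ ω, (⨆ π : Equiv.Perm (Fin n), ∑ i, X n i (π i) ω) ∂(μ n)) / ((n : ℝ) * g (1 / n)))
      atTop ≤ 1 :=
  limsup_expectation_max_assignment_general μ X hmeas P hlaw hint g hg hginf hslow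
end

section
/- Let X be a real random variable with E|X| < ∞ whose quantile function g(p) = inf{r : P(X ≥ r) ≤ p} tends to ∞ as p → 0+ and is slowly varying at 0. Then n·∫_1^∞ P(X ≥ g(1/n)·h) dh → 0 as n → ∞. -/
open MeasureTheory ProbabilityTheory Filter Topology

/-- If `X` is a real random variable with law `P`, `E|X| < ∞`, whose tail quantile
function `g p = inf {r : P(X ≥ r) ≤ p}` tends to `∞` at `0` and is slowly varying at `0`,
then `n ∫_1^∞ P(X ≥ g(1/n) h) dh → 0` as `n → ∞`. -/
theorem tail_integral_tendsto_zero
    (P : Measure ℝ) [IsProbabilityMeasure P]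
    (hint : Integrable id P)
    (g : ℝ → ℝ)
    (hg : ∀ p : ℝ, 0 < p → p < 1 → g p = sInf {r : ℝ | (P (Set.Ici r)).toReal ≤ p})
    (hginf : Tendsto g (𝓝[>] 0) atTop)
    (hslow : ∀ c : ℝ, 0 < c → Tendsto (fun p => g (c * p) / g p) (𝓝[>] 0) (𝓝 1)) :
    Tendsto
      (fun n : ℕ => (n : ℝ) * ∫ h in Set.Ioi (1 : ℝ), (P (Set.Ici (g (1 / n) * h))).toReal)
      atTop (𝓝 0) := by
  -- basic facts about the tail function
  have hFanti : Antitone (fun r : ℝ => P (Set.Ici r)) := fun a b h =>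
    measure_mono (Set.Ici_subset_Ici.2 h)
  have hFranti : Antitone (fun r : ℝ => (P (Set.Ici r)).toReal) := fun a b h =>
    ENNReal.toReal_mono (measure_ne_top _ _) (hFanti h)
  -- the defining set is nonempty
  have hSne : ∀ p : ℝ, 0 < p → {r : ℝ | (P (Set.Ici r)).toReal ≤ p}.Nonempty := by
    intro p hp
    have h1 : Tendsto (fun n : ℕ => P (Set.Ici (n : ℝ))) atTop
        (𝓝 (P (⋂ n : ℕ, Set.Ici (n : ℝ)))) := by
      apply tendsto_measure_iInter_atTop
        (fun n => (measurableSet_Ici).nullMeasurableSet)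
        (fun a b h => Set.Ici_subset_Ici.2 (by exact_mod_cast h))
      exact ⟨0, measure_ne_top _ _⟩
    have h2 : (⋂ n : ℕ, Set.Ici (n : ℝ)) = ∅ := by
      ext x
      simp only [Set.mem_iInter, Set.mem_Ici, Set.mem_empty_iff_false, iff_false, not_forall,
        not_le]
      obtain ⟨n, hn⟩ := exists_nat_gt x
      exact ⟨n, hn⟩
    rw [h2, measure_empty] at h1
    have h3 : ∀ᶠ n : ℕ in atTop, P (Set.Ici (n : ℝ)) < ENNReal.ofReal p :=
      h1.eventually_lt_const (by simpa using hp)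
    obtain ⟨n, hn⟩ := h3.exists
    refine ⟨n, ?_⟩
    have := hn.le
    rw [ENNReal.le_ofReal_iff_toReal_le (measure_ne_top _ _) hp.le] at this
    exact this
  -- key upper bound: beyond the quantile, the tail is small
  have hF_le : ∀ p : ℝ, 0 < p → p < 1 → ∀ t : ℝ, g p < t → (P (Set.Ici t)).toReal ≤ p := by
    intro p hp hp1 t ht
    rw [hg p hp hp1] at ht
    obtain ⟨r, hr, hrt⟩ := exists_lt_of_csInf_lt (hSne p hp) ht
    exact le_trans (hFranti hrt.le) hr
  -- the defining set is bounded below when p < 1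
  have hSbdd : ∀ p : ℝ, p < 1 → BddBelow {r : ℝ | (P (Set.Ici r)).toReal ≤ p} := by
    intro p hp1
    have h1 : Tendsto (fun n : ℕ => P (Set.Ici (-(n : ℝ)))) atTop
        (𝓝 (P (⋃ n : ℕ, Set.Ici (-(n : ℝ))))) := by
      apply tendsto_measure_iUnion_atTop
      intro a b h
      exact Set.Ici_subset_Ici.2 (by exact_mod_cast neg_le_neg (by exact_mod_cast h))
    have h2 : (⋃ n : ℕ, Set.Ici (-(n : ℝ))) = Set.univ := by
      ext x
      simp only [Set.mem_iUnion, Set.mem_Ici, Set.mem_univ, iff_true]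
      obtain ⟨n, hn⟩ := exists_nat_gt (-x)
      exact ⟨n, by linarith⟩
    rw [h2, measure_univ] at h1
    have h3 : ∀ᶠ n : ℕ in atTop, ENNReal.ofReal p < P (Set.Ici (-(n : ℝ))) :=
      h1.eventually_const_lt (ENNReal.ofReal_lt_one.2 hp1)
    obtain ⟨n, hn⟩ := h3.exists
    refine ⟨-(n : ℝ), fun r hr => ?_⟩
    by_contra hcon
    push_neg at hcon
    have h4 : (P (Set.Ici (-(n : ℝ)))).toReal ≤ (P (Set.Ici r)).toReal := hFranti hcon.le
    have h5 : p < (P (Set.Ici (-(n : ℝ)))).toReal := by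
      rcases lt_or_ge p 0 with h | h
      · exact lt_of_lt_of_le h ENNReal.toReal_nonneg
      · have := (ENNReal.toReal_lt_toReal (by simp) (measure_ne_top _ _)).2 hn
        rwa [ENNReal.toReal_ofReal h] at this
    have h6 : (P (Set.Ici r)).toReal ≤ p := hr
    linarith
  -- antitonicity of g
  have gA : ∀ p q : ℝ, 0 < p → p ≤ q → q < 1 → g q ≤ g p := by
    intro p q hp hpq hq1
    rw [hg p hp (lt_of_le_of_lt hpq hq1), hg q (lt_of_lt_of_le hp hpq) hq1]
    apply csInf_le_csInf (hSbdd q hq1) (hSne p hp)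
    intro r hr
    exact le_trans hr hpq
  -- main argument
  rw [NormedAddCommGroup.tendsto_nhds_zero]
  intro ε₀ hε₀
  set ε := ε₀ / 4 with hεdef
  have hε : 0 < ε := by positivity
  set c := 2 * (1 + ε) with hcdef
  have hc1 : 1 < c := by simp only [hcdef]; linarith
  have hc0 : 0 < c := by linarith
  -- Potter bound and g ≥ 1 eventually near 0
  have hev : ∀ᶠ q in 𝓝[>] (0:ℝ), g (c⁻¹ * q) / g q < 1 + ε ∧ 1 ≤ g q :=
    ((hslow c⁻¹ (by positivity)).eventually_lt_const (by linarith)).and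
      (hginf.eventually_ge_atTop 1)
  obtain ⟨δ₁, hδ₁pos, hδ₁⟩ : ∃ δ₁ > 0, ∀ x : ℝ, 0 < x → x < δ₁ →
      (g (c⁻¹ * x) / g x < 1 + ε ∧ 1 ≤ g x) := by
    rw [eventually_nhdsWithin_iff, Metric.eventually_nhds_iff] at hev
    obtain ⟨δ, hδpos, hδ⟩ := hev
    refine ⟨δ, hδpos, fun x hx hxδ => hδ ?_ hx⟩
    rw [Real.dist_eq, sub_zero, abs_of_pos hx]
    exact hxδ
  set δ := min δ₁ (1/2) with hδdef
  have hδpos : 0 < δ := lt_min hδ₁pos (by norm_num)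
  have hn_ev : ∀ᶠ n : ℕ in atTop, 1 ≤ n ∧ (1 : ℝ) / n < δ :=
    (eventually_ge_atTop 1).and
      (tendsto_one_div_atTop_nhds_zero_nat.eventually_lt_const hδpos)
  filter_upwards [hn_ev] with n hn
  obtain ⟨hn1, hnδ⟩ := hn
  have hn0 : (0:ℝ) < n := by exact_mod_cast hn1
  set p := (1:ℝ) / n with hpdef
  have hp0 : 0 < p := by positivity
  have hp1 : p < 1 := lt_of_lt_of_le hnδ (le_trans (min_le_right _ _) (by norm_num))
  have hpδ₁ : p < δ₁ := lt_of_lt_of_le hnδ (min_le_left _ _)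
  set a := g p with hadef
  have ha1 : 1 ≤ a := (hδ₁ p hp0 hpδ₁).2
  have ha0 : 0 < a := lt_of_lt_of_le one_pos ha1
  set q : ℕ → ℝ := fun k => p * c⁻¹ ^ k with hqdef
  have hq0 : ∀ k, 0 < q k := fun k => by
    simp only [hqdef]; positivity
  have hqle : ∀ k, q k ≤ p := by
    intro k
    have h1 : c⁻¹ ^ k ≤ 1 := pow_le_one₀ (by positivity) (by
      rw [inv_le_one_iff₀]; right; exact hc1.le)
    calc p * c⁻¹ ^ k ≤ p * 1 := mul_le_mul_of_nonneg_left h1 hp0.le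
      _ = p := mul_one p
  have hqδ : ∀ k, q k < δ₁ := fun k => lt_of_le_of_lt (hqle k) hpδ₁
  have hq1 : ∀ k, q k < 1 := fun k => lt_of_le_of_lt (hqle k) hp1
  have hqsucc : ∀ k, q (k+1) = c⁻¹ * q k := by
    intro k
    simp only [hqdef, pow_succ]
    ring
  have hg1 : ∀ k, 1 ≤ g (q k) := fun k => (hδ₁ _ (hq0 k) (hqδ k)).2
  have hstep : ∀ k, g (q (k+1)) ≤ (1+ε) * g (q k) := by
    intro k
    have h := (hδ₁ _ (hq0 k) (hqδ k)).1
    rw [div_lt_iff₀ (lt_of_lt_of_le one_pos (hg1 k))] at h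
    rw [hqsucc k]
    exact h.le
  have hgbound : ∀ k, g (q k) ≤ (1+ε)^k * a := by
    intro k
    induction k with
    | zero => simp only [hqdef, pow_zero, mul_one, one_mul, hadef]; exact le_rfl
    | succ k ih =>
      calc g (q (k+1)) ≤ (1+ε) * g (q k) := hstep k
        _ ≤ (1+ε) * ((1+ε)^k * a) := mul_le_mul_of_nonneg_left ih (by linarith)
        _ = (1+ε)^(k+1) * a := by ring
  have hgmono : ∀ k, g (q k) ≤ g (q (k+1)) := by
    intro k
    apply gA _ _ (hq0 (k+1)) _ (hq1 k)
    rw [hqsucc k]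
    calc c⁻¹ * q k ≤ 1 * q k := mul_le_mul_of_nonneg_right (by
        rw [inv_le_one_iff₀]; right; exact hc1.le) (hq0 k).le
      _ = q k := one_mul _
  have hqtend : Tendsto q atTop (𝓝[>] (0:ℝ)) := by
    apply tendsto_nhdsWithin_of_tendsto_nhds_of_eventually_within
    · have h1 : Tendsto (fun k : ℕ => c⁻¹ ^ k) atTop (𝓝 0) :=
        tendsto_pow_atTop_nhds_zero_of_lt_one (by positivity) (by
          rw [inv_lt_one_iff₀]; right; exact hc1)
      simpa [hqdef] using h1.const_mul p
    · exact Eventually.of_forall fun k => hq0 k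
  have hgtop : Tendsto (fun k => g (q k)) atTop atTop := hginf.comp hqtend
  -- cover of (1, ∞) by the quantile intervals
  have hcover : Set.Ioi (1:ℝ) ⊆ ⋃ k, Set.Ioc (g (q k) / a) (g (q (k+1)) / a) := by
    intro t ht
    have ht1 : (1:ℝ) < t := ht
    have hex : ∃ k, t ≤ g (q k) / a := by
      obtain ⟨k, hk⟩ := (tendsto_atTop.mp hgtop (t * a)).exists
      exact ⟨k, (le_div_iff₀ ha0).2 hk⟩
    classical
    have hK0 : Nat.find hex ≠ 0 := by
      intro h
      have h2 := Nat.find_spec hex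
      rw [h] at h2
      have h3 : q 0 = p := by simp [hqdef]
      rw [h3] at h2
      rw [← hadef, div_self ha0.ne'] at h2
      linarith
    obtain ⟨m, hm⟩ := Nat.exists_eq_succ_of_ne_zero hK0
    have hmlt : ¬ t ≤ g (q m) / a := Nat.find_min hex (by omega)
    push_neg at hmlt
    refine Set.mem_iUnion.2 ⟨m, hmlt, ?_⟩
    have h4 := Nat.find_spec hex
    rw [hm] at h4
    exact h4
  -- measurability
  have hmeas : Measurable fun t : ℝ => P (Set.Ici (a * t)) :=
    hFanti.measurable.comp (measurable_const_mul a)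
  have h2half : c⁻¹ * (1+ε) = 2⁻¹ := by
    have h1 : (1+ε) ≠ (0:ℝ) := by linarith
    rw [hcdef, mul_inv, mul_assoc, inv_mul_cancel₀ h1, mul_one]
  -- key lintegral bound
  have key : ∫⁻ t in Set.Ioi (1:ℝ), P (Set.Ici (a * t)) ≤ ENNReal.ofReal (2 * ε * p) := by
    calc ∫⁻ t in Set.Ioi (1:ℝ), P (Set.Ici (a*t))
        ≤ ∫⁻ t in ⋃ k, Set.Ioc (g (q k)/a) (g (q (k+1))/a), P (Set.Ici (a*t)) :=
          lintegral_mono_set hcover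
      _ ≤ ∑' k, ∫⁻ t in Set.Ioc (g (q k)/a) (g (q (k+1))/a), P (Set.Ici (a*t)) :=
          lintegral_iUnion_le _ _
      _ ≤ ∑' k : ℕ, ENNReal.ofReal (ε * p) * (ENNReal.ofReal 2⁻¹)^k := by
          apply ENNReal.tsum_le_tsum
          intro k
          have hΔ : g (q (k+1))/a - g (q k)/a ≤ ε * (1+ε)^k := by
            rw [div_sub_div_same, div_le_iff₀ ha0]
            have h1 : g (q (k+1)) - g (q k) ≤ ε * g (q k) := by
              have := hstep k
              nlinarith
            have h2 : ε * g (q k) ≤ ε * ((1+ε)^k * a) :=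
              mul_le_mul_of_nonneg_left (hgbound k) hε.le
            nlinarith
          calc ∫⁻ t in Set.Ioc (g (q k)/a) (g (q (k+1))/a), P (Set.Ici (a*t))
              ≤ ∫⁻ _ in Set.Ioc (g (q k)/a) (g (q (k+1))/a), ENNReal.ofReal (q k) := by
                apply setLIntegral_mono measurable_const
                intro t ht
                have h1 : g (q k) < a * t := by
                  rw [mul_comm]
                  exact (div_lt_iff₀ ha0).1 ht.1
                rw [ENNReal.le_ofReal_iff_toReal_le (measure_ne_top _ _) (hq0 k).le]
                exact hF_le (q k) (hq0 k) (hq1 k) _ h1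
            _ = ENNReal.ofReal (q k) * volume (Set.Ioc (g (q k)/a) (g (q (k+1))/a)) :=
                setLIntegral_const _ _
            _ ≤ ENNReal.ofReal (ε * p) * (ENNReal.ofReal 2⁻¹)^k := by
                rw [Real.volume_Ioc, ← ENNReal.ofReal_mul (hq0 k).le,
                  ← ENNReal.ofReal_pow (by norm_num), ← ENNReal.ofReal_mul (by positivity)]
                apply ENNReal.ofReal_le_ofReal
                calc q k * (g (q (k+1))/a - g (q k)/a) ≤ q k * (ε * (1+ε)^k) :=
                    mul_le_mul_of_nonneg_left hΔ (hq0 k).le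
                  _ = ε * p * (c⁻¹ * (1+ε))^k := by
                      simp only [hqdef, mul_pow]
                      ring
                  _ = ε * p * 2⁻¹^k := by rw [h2half]
      _ = ENNReal.ofReal (ε * p) * ∑' k : ℕ, (ENNReal.ofReal 2⁻¹)^k :=
          ENNReal.tsum_mul_left
      _ = ENNReal.ofReal (2 * ε * p) := by
          rw [ENNReal.tsum_geometric]
          have h1 : ENNReal.ofReal (2⁻¹ : ℝ) = 2⁻¹ := by
            rw [ENNReal.ofReal_inv_of_pos (by norm_num)]
            norm_num
          rw [h1, ENNReal.one_sub_inv_two, inv_inv]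
          rw [show (2:ENNReal) = ENNReal.ofReal 2 by norm_num,
            ← ENNReal.ofReal_mul (by positivity)]
          congr 1
          ring
  -- convert to the real integral
  have hInt : ∫ t in Set.Ioi (1:ℝ), (P (Set.Ici (a*t))).toReal =
      (∫⁻ t in Set.Ioi (1:ℝ), P (Set.Ici (a*t))).toReal :=
    integral_toReal hmeas.aemeasurable (Eventually.of_forall fun t => measure_lt_top P _)
  have hnonneg : 0 ≤ ∫ t in Set.Ioi (1:ℝ), (P (Set.Ici (a*t))).toReal :=
    integral_nonneg fun t => ENNReal.toReal_nonneg
  have hfin : (∫⁻ t in Set.Ioi (1:ℝ), P (Set.Ici (a*t))).toReal ≤ 2 * ε * p := by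
    apply ENNReal.toReal_le_of_le_ofReal (by positivity) key
  have hval : (n:ℝ) * ∫ t in Set.Ioi (1:ℝ), (P (Set.Ici (a*t))).toReal ≤ 2 * ε := by
    rw [hInt]
    calc (n:ℝ) * (∫⁻ t in Set.Ioi (1:ℝ), P (Set.Ici (a*t))).toReal
        ≤ (n:ℝ) * (2 * ε * p) := mul_le_mul_of_nonneg_left hfin (Nat.cast_nonneg n)
      _ = 2 * ε * ((n:ℝ) * p) := by ring
      _ = 2 * ε := by
          rw [hpdef, mul_one_div, div_self hn0.ne', mul_one]
  rw [Real.norm_eq_abs, abs_of_nonneg (mul_nonneg (Nat.cast_nonneg n) hnonneg)]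
  calc (n:ℝ) * ∫ h in Set.Ioi (1:ℝ), (P (Set.Ici (a * h))).toReal ≤ 2 * ε := hval
    _ < ε₀ := by rw [hεdef]; linarith
end
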